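/- Let k ≥ 1 and let P be the path graph on the 2k vertices x_0, x_1, …, x_{2k−1}, where x_i is adjacent to x_{i+1} for 0 ≤ i ≤ 2k−2. Apply X measurements successively at the vertices x_{2k−3}, x_{2k−5}, …, x_3, x_1 (in this order of decreasing index), where the X measurement at x_{2j−1} is taken with chosen neighbour x_{2j}. The resulting graph is the star graph with centre x_0 on the k+1 vertices {x_0, x_2, x_4, …, x_{2k−2}, x_{2k−1}}, i.e. x_0 is adjacent to each of x_2, x_4, …, x_{2k−2}, x_{2k−1} and there are no other edges. -/

import Mathlib

/-- A finite simple graph with an explicit vertex set inside an ambient type `α`. -/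
structure FGraph (α : Type*) where
  verts : Set α
  Adj : α → α → Prop
  symm : ∀ {a b}, Adj a b → Adj b a
  loopless : ∀ a, ¬ Adj a a
  edge_mem : ∀ {a b}, Adj a b → a ∈ verts ∧ b ∈ verts

namespace FGraph

variable {α : Type*}

/-- Local complementation at `v`: two distinct vertices are adjacent iff exactly one of
(adjacent in `G`) or (both neighbours of `v` in `G`) holds. -/
def LC (G : FGraph α) (v : α) : FGraph α where
  verts := G.verts
  Adj a b := a ≠ b ∧ Xor' (G.Adj a b) (G.Adj v a ∧ G.Adj v b)
  symm := by
    rintro a b ⟨hne, h⟩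
    refine ⟨hne.symm, ?_⟩
    rcases h with ⟨h1, h2⟩ | ⟨h1, h2⟩
    · exact Or.inl ⟨G.symm h1, fun hx => h2 ⟨hx.2, hx.1⟩⟩
    · exact Or.inr ⟨⟨h1.2, h1.1⟩, fun hx => h2 (G.symm hx)⟩
  loopless := fun a h => h.1 rfl
  edge_mem := by
    rintro a b ⟨hne, h⟩
    rcases h with ⟨h1, _⟩ | ⟨⟨ha, hb⟩, _⟩
    · exact G.edge_mem h1
    · exact ⟨(G.edge_mem ha).2, (G.edge_mem hb).2⟩

/-- Z measurement at `v`: delete the vertex `v` together with all incident edges. -/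
def ZM (G : FGraph α) (v : α) : FGraph α where
  verts := G.verts \ {v}
  Adj a b := G.Adj a b ∧ a ≠ v ∧ b ≠ v
  symm := fun h => ⟨G.symm h.1, h.2.2, h.2.1⟩
  loopless := fun a h => G.loopless a h.1
  edge_mem := by
    rintro a b ⟨h, ha, hb⟩
    exact ⟨⟨(G.edge_mem h).1, ha⟩, ⟨(G.edge_mem h).2, hb⟩⟩

/-- X measurement at `u` with chosen neighbour `w`:
`X_u(G) = LC_w(Z_u(LC_u(LC_w(G))))`. -/
def XM (G : FGraph α) (u w : α) : FGraph α :=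
  ((((G.LC w).LC u).ZM u).LC w)

/-- Y measurement at `v`: `Y_v(G) = Z_v(LC_v(G))`. -/
def YM (G : FGraph α) (v : α) : FGraph α :=
  (G.LC v).ZM v

/-- `G` is a star graph with centre `c`. -/
def IsStar (G : FGraph α) (c : α) : Prop :=
  c ∈ G.verts ∧
    ∀ a b, G.Adj a b ↔ (a ≠ b ∧ a ∈ G.verts ∧ b ∈ G.verts ∧ (a = c ∨ b = c))

/-- `G` is a complete graph on its vertex set. -/
def IsComplete (G : FGraph α) : Prop :=
  ∀ a b, G.Adj a b ↔ (a ≠ b ∧ a ∈ G.verts ∧ b ∈ G.verts)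

/-- One step of local complementation or vertex deletion. -/
inductive Step : FGraph α → FGraph α → Prop
  | lc (G : FGraph α) (v : α) : Step G (G.LC v)
  | del (G : FGraph α) (v : α) : Step G (G.ZM v)

/-- `H` is a vertex-minor of `G`: `H` is obtained from `G` by a finite sequence of
local complementations and vertex deletions. -/
def IsVertexMinor (H G : FGraph α) : Prop :=
  Relation.ReflTransGen Step G H

/-- One step of local complementation. -/
inductive LCStep : FGraph α → FGraph α → Prop
  | lc (G : FGraph α) (v : α) : LCStep G (G.LC v)

/-- `H` is obtained from `G` by a finite sequence of local complementations. -/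
def LCReach (G H : FGraph α) : Prop :=
  Relation.ReflTransGen LCStep G H

end FGraph

/-- The path graph on vertices `0, 1, …, n-1`, with `i` adjacent to `i+1`. -/
def pathGraph (n : ℕ) : FGraph ℕ where
  verts := {i | i < n}
  Adj a b := (a + 1 = b ∧ b < n) ∨ (b + 1 = a ∧ a < n)
  symm := fun h => h.symm
  loopless := fun a h => by
    rcases h with ⟨h, _⟩ | ⟨h, _⟩ <;> omega
  edge_mem := by
    rintro a b (⟨h, hb⟩ | ⟨h, ha⟩) <;> constructor <;> simp only [Set.mem_setOf_eq] <;> omega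

/-- The graph obtained from the path on `2k` vertices after `t` successive
X measurements: the `(t+1)`-st measurement is at the vertex `x_{2j-1}` with
chosen neighbour `x_{2j}`, where `j = k - 1 - t`. -/
def pathXMSeq (k : ℕ) : ℕ → FGraph ℕ
  | 0 => pathGraph (2 * k)
  | t + 1 => (pathXMSeq k t).XM (2 * (k - 1 - t) - 1) (2 * (k - 1 - t))

/-!
Write `x_i` as `i`. After the measurements at `2k-3, …, m+3`, the graph is the path `0 — 1 — ⋯ — m`
together with edges from the hub `m` to the leaves `b > m` that are even or equal to `2k-1`.
The next measurement is at `u = m-1`, whose only neighbours are `p = m-2` and the hub `w = m`.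
For such a vertex the X measurement is explicit: `LC_w` and then `LC_u` toggle the edges between
`p` and the other neighbours of `w` and leave `w` adjacent to `p` alone, so that after deleting `u`
the final `LC_w` does nothing. Here this moves the hub from `m` to `m-2`, with `m` becoming a leaf,
and after the last measurement only the star centred at `0` remains.
-/

namespace FGraph

variable {α : Type*}

theorem adj_comm (G : FGraph α) {a b : α} : G.Adj a b ↔ G.Adj b a := ⟨G.symm, G.symm⟩

theorem ext {G H : FGraph α} (hV : G.verts = H.verts) (hA : ∀ a b, G.Adj a b ↔ H.Adj a b) :
    G = H := by
  obtain ⟨V, A, _, _, _⟩ := G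
  obtain ⟨V', A', _, _, _⟩ := H
  obtain rfl : A = A' := funext₂ fun a b => propext (hA a b)
  cases hV
  rfl

theorem LC_adj (G : FGraph α) (v a b : α) :
    (G.LC v).Adj a b ↔ a ≠ b ∧ Xor (G.Adj a b) (G.Adj v a ∧ G.Adj v b) := Iff.rfl

theorem ZM_adj (G : FGraph α) (v a b : α) :
    (G.ZM v).Adj a b ↔ G.Adj a b ∧ a ≠ v ∧ b ≠ v := Iff.rfl

theorem XM_verts (G : FGraph α) (u w : α) : (G.XM u w).verts = G.verts \ {u} := rfl

theorem LC_adj_self (G : FGraph α) (v x : α) : (G.LC v).Adj v x ↔ G.Adj v x := by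
  rw [LC_adj, xor_def]
  grind [G.loopless]

theorem LC_adj_of_subsingleton (G : FGraph α) {v : α}
    (hv : ∀ x y, G.Adj v x → G.Adj v y → x = y) (a b : α) : (G.LC v).Adj a b ↔ G.Adj a b := by
  rw [LC_adj, xor_def]
  grind [G.loopless]

theorem XM_adj_of_forall_adj_iff (G : FGraph α) {u w p : α}
    (hu : ∀ x, G.Adj u x ↔ x = p ∨ x = w) (hwp : ¬ G.Adj w p) (a b : α) :
    (G.XM u w).Adj a b ↔ a ≠ b ∧ a ≠ u ∧ b ≠ u ∧
      ((a = w ∧ b = p) ∨ (a = p ∧ b = w) ∨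
        (a ≠ w ∧ b ≠ w ∧ Xor (G.Adj a b) ((a = p ∧ G.Adj w b) ∨ (b = p ∧ G.Adj w a)))) := by
  have huw : G.Adj u w := (hu w).2 (Or.inr rfl)
  have hLC : ∀ x, (G.LC w).Adj u x ↔ x ≠ u ∧ (x = p ∨ x = w ∨ G.Adj w x) := by
    intro x
    rw [LC_adj, xor_def, hu, G.adj_comm (a := w) (b := u)]
    grind [G.loopless]
  have hw : ∀ x, (((G.LC w).LC u).ZM u).Adj w x → x = p := by
    intro x
    rw [ZM_adj, LC_adj (G.LC w) u, hLC, hLC, LC_adj_self, xor_def]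
    grind
  rw [XM, LC_adj_of_subsingleton _ (fun x y hx hy => (hw x hx).trans (hw y hy).symm),
    ZM_adj, LC_adj (G.LC w) u, hLC, hLC, LC_adj, xor_def, xor_def]
  grind [G.loopless, adj_comm]

end FGraph

def pathStarLeaves (n m : ℕ) : Set ℕ := {b | m < b ∧ b < n ∧ (Even b ∨ b + 1 = n)}

theorem lt_of_mem_pathStarLeaves {n m b : ℕ} (hb : b ∈ pathStarLeaves n m) : m < b := hb.1

theorem pathStarLeaves_eq_insert {n m : ℕ} (hm : Even m) (hmn : m + 2 < n) :
    pathStarLeaves n m = insert (m + 2) (pathStarLeaves n (m + 2)) := by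
  ext b
  simp only [pathStarLeaves, Set.mem_insert_iff, Set.mem_ofPred_eq, Nat.even_iff] at hm ⊢
  omega

def pathStar (n m : ℕ) : FGraph ℕ where
  verts := {i | i ≤ m} ∪ pathStarLeaves n m
  Adj a b := (a + 1 = b ∧ b ≤ m) ∨ (b + 1 = a ∧ a ≤ m) ∨
    (a = m ∧ b ∈ pathStarLeaves n m) ∨ (b = m ∧ a ∈ pathStarLeaves n m)
  symm := by tauto
  loopless a h := by
    have := @lt_of_mem_pathStarLeaves n m a
    grind
  edge_mem {a b} h := by
    have := @lt_of_mem_pathStarLeaves n m a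
    have := @lt_of_mem_pathStarLeaves n m b
    simp only [Set.mem_union, Set.mem_ofPred_eq]
    grind

theorem pathGraph_eq_pathStar (m : ℕ) : pathGraph (m + 2) = pathStar (m + 2) m := by
  refine FGraph.ext ?_ fun a b => ?_
  · ext i
    simp only [pathGraph, pathStar, pathStarLeaves, Set.mem_union, Set.mem_ofPred_eq]
    omega
  · simp only [pathGraph, pathStar, pathStarLeaves, Set.mem_ofPred_eq]
    omega

theorem pathStar_XM {n m : ℕ} (hm : Even m) (hmn : m + 2 < n) :
    (pathStar n (m + 2)).XM (m + 1) (m + 2) = pathStar n m := by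
  have hL := @lt_of_mem_pathStarLeaves n (m + 2)
  have hu : ∀ x, (pathStar n (m + 2)).Adj (m + 1) x ↔ x = m ∨ x = m + 2 := by
    intro x
    have := hL (b := m + 1)
    simp only [pathStar]
    grind
  have hwp : ¬ (pathStar n (m + 2)).Adj (m + 2) m := by
    have := hL (b := m)
    simp only [pathStar]
    grind
  refine FGraph.ext ?_ fun a b => ?_
  · ext i
    have := hL (b := i)
    simp only [FGraph.XM_verts, pathStar, pathStarLeaves_eq_insert hm hmn, Set.mem_sdiff,
      Set.mem_union, Set.mem_insert_iff, Set.mem_ofPred_eq, Set.mem_singleton_iff]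
    grind
  · have := hL (b := a)
    have := hL (b := b)
    have := hL (b := m + 2)
    rw [FGraph.XM_adj_of_forall_adj_iff _ hu hwp, xor_def]
    simp only [pathStar, pathStarLeaves_eq_insert hm hmn, Set.mem_insert_iff]
    grind (splits := 100)

theorem isStar_pathStar_zero (n : ℕ) : (pathStar n 0).IsStar 0 := by
  refine ⟨Set.mem_union_left _ (le_refl 0), fun a b => ?_⟩
  have := @lt_of_mem_pathStarLeaves n 0 a
  have := @lt_of_mem_pathStarLeaves n 0 b
  simp only [pathStar, Set.mem_union, Set.mem_ofPred_eq]
  grind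

theorem pathXMSeq_eq_pathStar {k t : ℕ} (ht : t < k) :
    pathXMSeq k t = pathStar (2 * k) (2 * (k - 1 - t)) := by
  induction t with
  | zero =>
    rw [pathXMSeq, Nat.sub_zero, show 2 * k = 2 * (k - 1) + 2 by omega]
    exact pathGraph_eq_pathStar _
  | succ t ih =>
    obtain ⟨m, hm⟩ : ∃ m, m = 2 * (k - 1 - (t + 1)) := ⟨_, rfl⟩
    have hw : 2 * (k - 1 - t) = m + 2 := by omega
    have hu : 2 * (k - 1 - t) - 1 = m + 1 := by omega
    rw [pathXMSeq, ih (by omega), hu, hw, ← hm]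
    exact pathStar_XM ⟨k - 1 - (t + 1), by omega⟩ (by omega)

/-- applying X measurements at `x_{2k-3}, x_{2k-5}, …, x_3, x_1`
(measurement at `x_{2j-1}` taken with chosen neighbour `x_{2j}`) turns the path
on `2k` vertices into the star with centre `x₀` on the `k+1` vertices
`{x_0, x_2, …, x_{2k-2}, x_{2k-1}}`. -/
theorem pathXMSeq_star (k : ℕ) (hk : 1 ≤ k) :
    (pathXMSeq k (k - 1)).verts = {i | i < 2 * k ∧ (Even i ∨ i = 2 * k - 1)} ∧
    ∀ a b, (pathXMSeq k (k - 1)).Adj a b ↔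
      (a ∈ {i | i < 2 * k ∧ (Even i ∨ i = 2 * k - 1)} ∧
       b ∈ {i | i < 2 * k ∧ (Even i ∨ i = 2 * k - 1)} ∧
       a ≠ b ∧ (a = 0 ∨ b = 0)) := by
  have hG : pathXMSeq k (k - 1) = pathStar (2 * k) 0 := by
    rw [pathXMSeq_eq_pathStar (by omega), Nat.sub_self, mul_zero]
  have hV : (pathStar (2 * k) 0).verts = {i | i < 2 * k ∧ (Even i ∨ i = 2 * k - 1)} := by
    ext i
    simp only [pathStar, pathStarLeaves, Set.mem_union, Set.mem_ofPred_eq, Nat.even_iff]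
    omega
  refine ⟨hG ▸ hV, fun a b => ?_⟩
  rw [hG, (isStar_pathStar_zero _).2, hV]
  tauto
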